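/- The null space of a generalized Euclidean distance matrix D is contained in the orthogonal complement of the all-ones vector: if Dx = 0 then 1'x = 0. -/

import Mathlib

open Matrix

/-!
Write `s = 1ᵀx` and `t = diag(L)ᵀx`. Row `i` of `Dx = 0` reads
`a² L_ii s + b² t - 2ab (Lx)_i = 0`. Summing the rows kills the `L`-term because `1ᵀL = 0`,
giving `a² tr(L) s + n b² t = 0`; pairing with `x` gives `(a² + b²) s t = 2ab xᵀLx ≥ 0`.
The first identity makes `s t` a nonpositive multiple of `s²`, the second makes it
nonnegative, so `tr(L) s² = 0`, and `tr(L) > 0` because `L` is a nonzero PSD matrix.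
-/

section Gedm

variable {ι R : Type*} [Fintype ι] [CommRing R]

def gedm (a b : R) (L : Matrix ι ι R) : Matrix ι ι R :=
  of fun i j => a ^ 2 * L i i + b ^ 2 * L j j - 2 * a * b * L i j

theorem gedm_mulVec (a b : R) (L : Matrix ι ι R) (x : ι → R) :
    gedm a b L *ᵥ x =
      (a ^ 2 * (1 ⬝ᵥ x)) • L.diag + (b ^ 2 * (L.diag ⬝ᵥ x)) • 1 - (2 * a * b) • (L *ᵥ x) := by
  ext i
  simp only [gedm, mulVec, dotProduct, of_apply, Pi.add_apply, Pi.sub_apply, Pi.smul_apply,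
    Pi.one_apply, diag_apply, smul_eq_mul, Finset.mul_sum, Finset.sum_mul]
  rw [← Finset.sum_add_distrib, ← Finset.sum_sub_distrib]
  exact Finset.sum_congr rfl fun j _ => by ring

theorem one_dotProduct_mulVec_eq_zero {L : Matrix ι ι R} (hL : L.IsSymm) (hL1 : L *ᵥ 1 = 0)
    (x : ι → R) : 1 ⬝ᵥ (L *ᵥ x) = 0 := by
  rw [dotProduct_mulVec, ← hL.eq, vecMul_transpose, hL1, zero_dotProduct]

theorem one_dotProduct_gedm_mulVec (a b : R) {L : Matrix ι ι R} (hL : L.IsSymm)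
    (hL1 : L *ᵥ 1 = 0) (x : ι → R) :
    1 ⬝ᵥ (gedm a b L *ᵥ x) =
      a ^ 2 * L.trace * (1 ⬝ᵥ x) + Fintype.card ι * b ^ 2 * (L.diag ⬝ᵥ x) := by
  have h1 : (1 : ι → R) ⬝ᵥ 1 = Fintype.card ι := by simp [dotProduct]
  have hdiag : (1 : ι → R) ⬝ᵥ L.diag = L.trace := by simp [dotProduct, trace]
  rw [gedm_mulVec, dotProduct_sub, dotProduct_add, dotProduct_smul, dotProduct_smul,
    dotProduct_smul, one_dotProduct_mulVec_eq_zero hL hL1, h1, hdiag]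
  simp only [smul_eq_mul]
  ring

theorem dotProduct_gedm_mulVec_self (a b : R) (L : Matrix ι ι R) (x : ι → R) :
    x ⬝ᵥ (gedm a b L *ᵥ x) =
      (a ^ 2 + b ^ 2) * (1 ⬝ᵥ x) * (L.diag ⬝ᵥ x) - 2 * a * b * (x ⬝ᵥ (L *ᵥ x)) := by
  rw [gedm_mulVec, dotProduct_sub, dotProduct_add, dotProduct_smul, dotProduct_smul,
    dotProduct_smul, dotProduct_comm x L.diag, dotProduct_comm x 1]
  simp only [smul_eq_mul]
  ring

end Gedm

theorem eq_zero_of_gedm_kernel_identities {a b τ m s t q : ℝ} (ha : 0 < a) (hb : 0 < b)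
    (hτ : 0 < τ) (hm : 0 ≤ m) (hq : 0 ≤ q)
    (hsum : a ^ 2 * τ * s + m * b ^ 2 * t = 0) (hquad : (a ^ 2 + b ^ 2) * s * t = 2 * a * b * q) :
    s = 0 := by
  have hcoeff : 0 < (a ^ 2 + b ^ 2) * a ^ 2 * τ := by positivity
  have hsq : (a ^ 2 + b ^ 2) * a ^ 2 * τ * s ^ 2 = -(2 * a * b * m * b ^ 2 * q) := by
    linear_combination (a ^ 2 + b ^ 2) * s * hsum - m * b ^ 2 * hquad
  have hrhs : 0 ≤ 2 * a * b * m * b ^ 2 * q := by positivity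
  have hs2 : s ^ 2 ≤ 0 := by nlinarith
  exact pow_eq_zero_iff two_ne_zero |>.mp (le_antisymm hs2 (sq_nonneg s))

theorem stmt7 (n : ℕ) (L D : Matrix (Fin n) (Fin n) ℝ) (hL : L.PosSemidef)
    (hL1 : L *ᵥ (fun _ => (1 : ℝ)) = 0) (hL0 : L ≠ 0)
    (a b : ℝ) (ha : 0 < a) (hb : 0 < b)
    (hD : ∀ i j, D i j = a ^ 2 * L i i + b ^ 2 * L j j - 2 * a * b * L i j)
    (x : Fin n → ℝ) (hx : D *ᵥ x = 0) :
    (fun _ => (1 : ℝ)) ⬝ᵥ x = 0 := by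
  obtain rfl : D = gedm a b L := Matrix.ext hD
  have hsymm : L.IsSymm := isHermitian_iff_isSymm.mp hL.isHermitian
  have htrace : 0 < L.trace :=
    lt_of_le_of_ne hL.trace_nonneg (Ne.symm (hL.trace_eq_zero_iff.not.mpr hL0))
  have hquadL : 0 ≤ x ⬝ᵥ (L *ᵥ x) := by simpa using hL.dotProduct_mulVec_nonneg x
  change (1 : Fin n → ℝ) ⬝ᵥ x = 0
  refine eq_zero_of_gedm_kernel_identities (m := Fintype.card (Fin n)) (t := L.diag ⬝ᵥ x)
    ha hb htrace (Nat.cast_nonneg _) hquadL ?_ ?_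
  · rw [← one_dotProduct_gedm_mulVec a b hsymm hL1, hx, dotProduct_zero]
  · have hself := dotProduct_gedm_mulVec_self a b L x
    rw [hx, dotProduct_zero] at hself
    linear_combination -hself
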